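/- arXiv:1707.03584 — 4 statements merged into one kernel-verified Lean document; each statement's English description precedes it below -/
import Mathlib

section
/- Define the relation acyclic(p, q) on pairs of partitions of a finite set V by: acyclic(p, q) holds if and only if |V| + |p ⊔ q| − (|p| + |q|) = 0. Then for all partitions p, q, r of V: acyclic(p, q) ∧ acyclic(p ⊔ q, r) holds if and only if acyclic(q, r) ∧ acyclic(p, q ⊔ r) holds. -/
section Aux

variable {V : Type*}

/-- The setoid identifying just `x` and `y`. -/
def pairSetoid (x y : V) : Setoid V where
  r u v := u = v ∨ (u = x ∧ v = y) ∨ (u = y ∧ v = x)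
  iseqv := by
    refine ⟨fun u => Or.inl rfl, ?_, ?_⟩
    · intro u v h; rcases h with h | ⟨h1, h2⟩ | ⟨h1, h2⟩ <;> tauto
    · intro u v w h h'
      rcases h with h | ⟨h1, h2⟩ | ⟨h1, h2⟩ <;> rcases h' with h' | ⟨h1', h2'⟩ | ⟨h1', h2'⟩ <;>
        subst_vars <;> tauto

/-- Explicit description of `a ⊔ pairSetoid x y`. -/
def joinPair (a : Setoid V) (x y : V) : Setoid V where
  r u v := a u v ∨ (a u x ∧ a y v) ∨ (a u y ∧ a x v)
  iseqv := by
    refine ⟨fun u => Or.inl (a.refl u), ?_, ?_⟩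
    · rintro u v (h | ⟨h1, h2⟩ | ⟨h1, h2⟩)
      · exact Or.inl (a.symm h)
      · exact Or.inr (Or.inr ⟨a.symm h2, a.symm h1⟩)
      · exact Or.inr (Or.inl ⟨a.symm h2, a.symm h1⟩)
    · rintro u v w (h | ⟨h1, h2⟩ | ⟨h1, h2⟩) (h' | ⟨h1', h2'⟩ | ⟨h1', h2'⟩)
      · exact Or.inl (a.trans h h')
      · exact Or.inr (Or.inl ⟨a.trans h h1', h2'⟩)
      · exact Or.inr (Or.inr ⟨a.trans h h1', h2'⟩)
      · exact Or.inr (Or.inl ⟨h1, a.trans h2 h'⟩)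
      · exact Or.inl (a.trans h1 (a.trans (a.symm (a.trans h2 h1')) h2'))
      · exact Or.inl (a.trans h1 h2')
      · exact Or.inr (Or.inr ⟨h1, a.trans h2 h'⟩)
      · exact Or.inl (a.trans h1 h2')
      · exact Or.inl (a.trans h1 (a.trans (a.symm (a.trans h2 h1')) h2'))

theorem joinPair_eq (a : Setoid V) (x y : V) : a ⊔ pairSetoid x y = joinPair a x y := by
  apply le_antisymm
  · apply sup_le
    · exact Setoid.le_def.mpr fun h => Or.inl h
    · refine Setoid.le_def.mpr ?_
      rintro u v (rfl | ⟨rfl, rfl⟩ | ⟨rfl, rfl⟩)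
      · exact Or.inl (a.refl u)
      · exact Or.inr (Or.inl ⟨a.refl _, a.refl _⟩)
      · exact Or.inr (Or.inr ⟨a.refl _, a.refl _⟩)
  · refine Setoid.le_def.mpr ?_
    intro u v h
    have ha : ∀ {u v : V}, a u v → (a ⊔ pairSetoid x y) u v :=
      fun h => Setoid.le_def.mp le_sup_left h
    have hp : (a ⊔ pairSetoid x y) x y :=
      Setoid.le_def.mp le_sup_right (Or.inr (Or.inl ⟨rfl, rfl⟩))
    rcases h with h | ⟨h1, h2⟩ | ⟨h1, h2⟩
    · exact ha h
    · exact (a ⊔ pairSetoid x y).trans (ha h1) ((a ⊔ pairSetoid x y).trans hp (ha h2))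
    · exact (a ⊔ pairSetoid x y).trans (ha h1)
        ((a ⊔ pairSetoid x y).trans ((a ⊔ pairSetoid x y).symm hp) (ha h2))

open scoped Classical in
theorem card_join_pair [Finite V] (a : Setoid V) (x y : V) :
    Nat.card (Quotient a) ≤ Nat.card (Quotient (a ⊔ pairSetoid x y)) + 1 := by
  set s := a ⊔ pairSetoid x y with hs
  have hwd : ∀ u v : V, a u v →
      (if a u y ∧ ¬ a u x then (none : Option (Quotient s)) else some (Quotient.mk s u)) =
      (if a v y ∧ ¬ a v x then (none : Option (Quotient s)) else some (Quotient.mk s v)) := by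
    intro u v h
    have h1 : (a u y ∧ ¬ a u x) ↔ (a v y ∧ ¬ a v x) := by
      constructor
      · rintro ⟨hy, hx⟩
        exact ⟨a.trans (a.symm h) hy, fun hvx => hx (a.trans h hvx)⟩
      · rintro ⟨hy, hx⟩
        exact ⟨a.trans h hy, fun hux => hx (a.trans (a.symm h) hux)⟩
    by_cases hc : a u y ∧ ¬ a u x
    · rw [if_pos hc, if_pos (h1.mp hc)]
    · rw [if_neg hc, if_neg (fun hc' => hc (h1.mpr hc'))]
      exact congrArg some (Quotient.sound (Setoid.le_def.mp le_sup_left h))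
  let f : Quotient a → Option (Quotient s) := Quotient.lift
    (fun u => if a u y ∧ ¬ a u x then none else some (Quotient.mk s u)) hwd
  have hinj : Function.Injective f := by
    intro q1 q2
    induction q1 using Quotient.ind with | _ u =>
    induction q2 using Quotient.ind with | _ v =>
    intro h
    simp only [f, Quotient.lift_mk] at h
    by_cases hcu : a u y ∧ ¬ a u x <;> by_cases hcv : a v y ∧ ¬ a v x
    · exact Quotient.sound (a.trans hcu.1 (a.symm hcv.1))
    · rw [if_pos hcu, if_neg hcv] at h; exact absurd h (by simp)
    · rw [if_neg hcu, if_pos hcv] at h; exact absurd h (by simp)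
    · rw [if_neg hcu, if_neg hcv, Option.some_inj] at h
      have hsuv : s u v := Quotient.exact h
      rw [hs, joinPair_eq] at hsuv
      apply Quotient.sound
      rcases hsuv with h | ⟨h1, h2⟩ | ⟨h1, h2⟩
      · exact h
      · -- a u x, a y v
        have hvy : a v y := a.symm h2
        have hvx : a v x := by
          by_contra hvx
          exact hcv ⟨hvy, hvx⟩
        exact a.trans h1 (a.symm hvx)
      · -- a u y, a x v
        have hux : a u x := by
          by_contra hux
          exact hcu ⟨h1, hux⟩
        exact a.trans hux h2
  haveI : Finite (Option (Quotient s)) := by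
    haveI := Fintype.ofFinite (Quotient s); infer_instance
  calc Nat.card (Quotient a) ≤ Nat.card (Option (Quotient s)) :=
        Nat.card_le_card_of_injective f hinj
    _ = Nat.card (Quotient s) + 1 := Finite.card_option

/-- Split off `x` from its class in `b`. -/
def splitS (b : Setoid V) (x : V) : Setoid V where
  r u v := b u v ∧ (u = x ↔ v = x)
  iseqv := by
    refine ⟨fun u => ⟨b.refl u, Iff.rfl⟩, ?_, ?_⟩
    · rintro u v ⟨h, h'⟩; exact ⟨b.symm h, h'.symm⟩
    · rintro u v w ⟨h, h'⟩ ⟨g, g'⟩; exact ⟨b.trans h g, h'.trans g'⟩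

theorem split_sup {b : Setoid V} {x y : V} (hxy : x ≠ y) (hb : b x y) :
    splitS b x ⊔ pairSetoid x y = b := by
  apply le_antisymm
  · apply sup_le
    · exact Setoid.le_def.mpr fun h => h.1
    · refine Setoid.le_def.mpr ?_
      rintro u v (rfl | ⟨rfl, rfl⟩ | ⟨rfl, rfl⟩)
      · exact b.refl u
      · exact hb
      · exact b.symm hb
  · refine Setoid.le_def.mpr ?_
    intro u v h
    set s := splitS b x ⊔ pairSetoid x y with hs
    have hsp : ∀ {u v : V}, (splitS b x) u v → s u v := fun h => Setoid.le_def.mp le_sup_left h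
    have hpxy : s x y := Setoid.le_def.mp le_sup_right (Or.inr (Or.inl ⟨rfl, rfl⟩))
    by_cases hu : u = x <;> by_cases hv : v = x
    · subst hu; subst hv; exact s.refl _
    · subst hu
      have : b y v := b.trans (b.symm hb) h
      exact s.trans hpxy (hsp ⟨this, by simp [Ne.symm hxy, hv]⟩)
    · subst hv
      have : b y u := b.trans (b.symm hb) (b.symm h)
      exact s.symm (s.trans hpxy (hsp ⟨this, by simp [Ne.symm hxy, hu]⟩))
    · exact hsp ⟨h, by simp [hu, hv]⟩

open scoped Classical in
theorem card_split [Finite V] {b : Setoid V} {x y : V} (hxy : x ≠ y) (hb : b x y) :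
    Nat.card (Quotient (splitS b x)) = Nat.card (Quotient b) + 1 := by
  have hwd : ∀ u v : V, (splitS b x) u v →
      (if u = x then (none : Option (Quotient b)) else some (Quotient.mk b u)) =
      (if v = x then (none : Option (Quotient b)) else some (Quotient.mk b v)) := by
    rintro u v ⟨h, h'⟩
    by_cases hu : u = x
    · rw [if_pos hu, if_pos (h'.mp hu)]
    · rw [if_neg hu, if_neg (fun hv => hu (h'.mpr hv))]
      exact congrArg some (Quotient.sound h)
  let f : Quotient (splitS b x) → Option (Quotient b) := Quotient.lift
    (fun u => if u = x then none else some (Quotient.mk b u)) hwd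
  have hbij : Function.Bijective f := by
    constructor
    · intro q1 q2
      induction q1 using Quotient.ind with | _ u =>
      induction q2 using Quotient.ind with | _ v =>
      intro h
      simp only [f, Quotient.lift_mk] at h
      by_cases hu : u = x <;> by_cases hv : v = x
      · subst hu; subst hv; rfl
      · rw [if_pos hu, if_neg hv] at h; exact absurd h (by simp)
      · rw [if_neg hu, if_pos hv] at h; exact absurd h (by simp)
      · rw [if_neg hu, if_neg hv, Option.some_inj] at h
        exact Quotient.sound ⟨Quotient.exact h, by simp [hu, hv]⟩
    · rintro (_ | q)
      · exact ⟨Quotient.mk _ x, by simp [f]⟩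
      · induction q using Quotient.ind with | _ u =>
        by_cases hu : u = x
        · subst hu
          refine ⟨Quotient.mk _ y, ?_⟩
          simp only [f, Quotient.lift_mk, if_neg (Ne.symm hxy)]
          exact congrArg some (Quotient.sound (b.symm hb))
        · exact ⟨Quotient.mk _ u, by simp [f, hu]⟩
  calc Nat.card (Quotient (splitS b x)) = Nat.card (Option (Quotient b)) :=
        Nat.card_eq_of_bijective f hbij
    _ = Nat.card (Quotient b) + 1 := Finite.card_option

theorem card_quotient_le [Finite V] (b : Setoid V) : Nat.card (Quotient b) ≤ Nat.card V :=
  Nat.card_le_card_of_surjective (Quotient.mk b) fun q => Quotient.exists_rep q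

theorem key_aux [Finite V] :
    ∀ (n : ℕ) (a b : Setoid V), Nat.card V - Nat.card (Quotient b) ≤ n →
      Nat.card (Quotient a) + Nat.card (Quotient b) ≤
        Nat.card V + Nat.card (Quotient (a ⊔ b)) := by
  intro n
  induction n with
  | zero =>
    intro a b hn
    by_cases hdeg : ∀ u v : V, b u v → u = v
    · have hba : b ≤ a := Setoid.le_def.mpr fun h => (hdeg _ _ h) ▸ a.refl _
      rw [sup_eq_left.mpr hba]
      have := card_quotient_le b
      omega
    · push_neg at hdeg
      obtain ⟨x, y, hb, hxy⟩ := hdeg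
      have h1 := card_split (b := b) hxy hb
      have h2 := card_quotient_le (splitS b x)
      have h3 := card_quotient_le b
      omega
  | succ n ih =>
    intro a b hn
    by_cases hdeg : ∀ u v : V, b u v → u = v
    · have hba : b ≤ a := Setoid.le_def.mpr fun h => (hdeg _ _ h) ▸ a.refl _
      rw [sup_eq_left.mpr hba]
      have := card_quotient_le b
      omega
    · push_neg at hdeg
      obtain ⟨x, y, hb, hxy⟩ := hdeg
      have h1 := card_split (b := b) hxy hb
      have h2 := card_quotient_le (splitS b x)
      have h3 := card_join_pair a x y
      have hjoin : (a ⊔ pairSetoid x y) ⊔ splitS b x = a ⊔ b := by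
        rw [sup_assoc, sup_comm (pairSetoid x y) (splitS b x), split_sup hxy hb]
      have IH := ih (a ⊔ pairSetoid x y) (splitS b x) (by omega)
      rw [hjoin] at IH
      omega

theorem key [Finite V] (a b : Setoid V) :
    Nat.card (Quotient a) + Nat.card (Quotient b) ≤
      Nat.card V + Nat.card (Quotient (a ⊔ b)) :=
  key_aux (Nat.card V - Nat.card (Quotient b)) a b le_rfl

end Aux

/-- `acyclic(p, q)` holds iff `|V| + |p ⊔ q| − (|p| + |q|) = 0`. -/
def acyclicPart {V : Type*} (p q : Setoid V) : Prop :=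
  Nat.card V + Nat.card (Quotient (p ⊔ q)) =
    Nat.card (Quotient p) + Nat.card (Quotient q)

theorem acyclic_join_assoc {V : Type*} [Finite V] (p q r : Setoid V) :
    (acyclicPart p q ∧ acyclicPart (p ⊔ q) r) ↔
      (acyclicPart q r ∧ acyclicPart p (q ⊔ r)) := by
  have h1 := key p q
  have h2 := key (p ⊔ q) r
  have h3 := key q r
  have h4 := key p (q ⊔ r)
  have hassoc : Nat.card (Quotient (p ⊔ q ⊔ r)) = Nat.card (Quotient (p ⊔ (q ⊔ r))) := by
    rw [sup_assoc]
  simp only [acyclicPart]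
  rw [hassoc] at h2 ⊢
  omega
end

section
/- Let F_p = (V, E_p) and F_q = (V, E_q) be forests on the same finite vertex set V with E_p ∩ E_q = ∅, and let p = cc(F_p) and q = cc(F_q) be the partitions of V into the vertex sets of their connected components. Then the graph (V, E_p ∪ E_q) is a forest if and only if acyclic(p, q) holds, i.e., |V| + |p ⊔ q| = |p| + |q|. -/
namespace UnionForestAux

open SimpleGraph

variable {V : Type*}

/-- Walking in `G`, one can get between `a` and `b` in `G` minus the edge `s(u,v)` possibly
passing "through" the deleted edge. -/
lemma reach_cases (G : SimpleGraph V) (u v : V) {a b : V} (p : G.Walk a b) :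
    (G.deleteEdges {s(u,v)}).Reachable a b ∨
    ((G.deleteEdges {s(u,v)}).Reachable a u ∧ (G.deleteEdges {s(u,v)}).Reachable v b) ∨
    ((G.deleteEdges {s(u,v)}).Reachable a v ∧ (G.deleteEdges {s(u,v)}).Reachable u b) := by
  induction p with
  | nil => exact Or.inl (Reachable.refl _)
  | @cons a c b hac p ih =>
    by_cases he : s(a, c) = s(u, v)
    · rw [Sym2.eq_iff] at he
      rcases he with ⟨rfl, rfl⟩ | ⟨rfl, rfl⟩
      · rcases ih with h | ⟨h1, h2⟩ | ⟨h1, h2⟩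
        · exact Or.inr (Or.inl ⟨Reachable.refl _, h⟩)
        · exact Or.inl (h1.symm.trans h2)
        · exact Or.inl h2
      · rcases ih with h | ⟨h1, h2⟩ | ⟨h1, h2⟩
        · exact Or.inr (Or.inr ⟨Reachable.refl _, h⟩)
        · exact Or.inl h2
        · exact Or.inl (h1.symm.trans h2)
    · have hac' : (G.deleteEdges {s(u,v)}).Adj a c := by
        rw [deleteEdges_adj]; exact ⟨hac, by simpa using he⟩
      rcases ih with h | ⟨h1, h2⟩ | ⟨h1, h2⟩
      · exact Or.inl (hac'.reachable.trans h)
      · exact Or.inr (Or.inl ⟨hac'.reachable.trans h1, h2⟩)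
      · exact Or.inr (Or.inr ⟨hac'.reachable.trans h1, h2⟩)

lemma reach_delete_of_reach {G : SimpleGraph V} {u v : V}
    (h : (G.deleteEdges {s(u,v)}).Reachable u v) {a b : V} (hab : G.Reachable a b) :
    (G.deleteEdges {s(u,v)}).Reachable a b := by
  obtain ⟨p⟩ := hab
  rcases reach_cases G u v p with h' | ⟨h1, h2⟩ | ⟨h1, h2⟩
  · exact h'
  · exact (h1.trans h).trans h2
  · exact (h1.trans h.symm).trans h2

/-- Deleting a bridge increases the number of connected components by one. -/
lemma card_cc_delete [Finite V] {G : SimpleGraph V} {u v : V} (huv : G.Adj u v)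
    (hB : ¬ (G.deleteEdges {s(u,v)}).Reachable u v) :
    Nat.card (G.deleteEdges {s(u,v)}).ConnectedComponent
      = Nat.card G.ConnectedComponent + 1 := by
  classical
  set G' := G.deleteEdges {s(u,v)} with hG'
  have hle : G' ≤ G := deleteEdges_le _
  let φ : G'.ConnectedComponent → G.ConnectedComponent :=
    ConnectedComponent.map (Hom.ofLE hle)
  have hφ : ∀ w, φ (G'.connectedComponentMk w) = G.connectedComponentMk w := fun w => rfl
  have fib_u : ∀ C' : G'.ConnectedComponent, φ C' = G.connectedComponentMk u →
      C' = G'.connectedComponentMk u ∨ C' = G'.connectedComponentMk v := by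
    refine ConnectedComponent.ind (fun w hw => ?_)
    rw [hφ] at hw
    obtain ⟨p⟩ := ConnectedComponent.eq.mp hw
    rcases reach_cases G u v p with h | ⟨h1, _⟩ | ⟨h1, _⟩
    · exact Or.inl (ConnectedComponent.sound h)
    · exact Or.inl (ConnectedComponent.sound h1)
    · exact Or.inr (ConnectedComponent.sound h1)
  have fib_other : ∀ (C : G.ConnectedComponent), C ≠ G.connectedComponentMk u →
      ∀ w w', φ (G'.connectedComponentMk w) = C → φ (G'.connectedComponentMk w') = C →
      G'.connectedComponentMk w = G'.connectedComponentMk w' := by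
    intro C hC w w' hw hw'
    rw [hφ] at hw hw'
    obtain ⟨p⟩ := ConnectedComponent.eq.mp (hw.trans hw'.symm)
    rcases reach_cases G u v p with h | ⟨h1, _⟩ | ⟨h1, _⟩
    · exact ConnectedComponent.sound h
    · exact absurd (hw.symm.trans (ConnectedComponent.sound (h1.mono hle))) hC
    · exact absurd ((hw.symm.trans (ConnectedComponent.sound (h1.mono hle))).trans
        (ConnectedComponent.sound huv.symm.reachable)) hC
  letI : Fintype G.ConnectedComponent := Fintype.ofFinite _
  letI : Fintype G'.ConnectedComponent := Fintype.ofFinite _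
  letI : ∀ C : G.ConnectedComponent, Fintype {C' // φ C' = C} := fun C => Fintype.ofFinite _
  have e1 : Nat.card G'.ConnectedComponent
      = ∑ C : G.ConnectedComponent, Nat.card {C' // φ C' = C} := by
    rw [Nat.card_congr (Equiv.sigmaFiberEquiv φ).symm, Nat.card_eq_fintype_card,
      Fintype.card_sigma]
    exact Finset.sum_congr rfl fun C _ => Nat.card_eq_fintype_card.symm
  have hval : ∀ C : G.ConnectedComponent,
      Nat.card {C' // φ C' = C} = if C = G.connectedComponentMk u then 2 else 1 := by
    intro C
    split_ifs with hC
    · subst hC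
      rw [Nat.card_eq_two_iff]
      refine ⟨⟨G'.connectedComponentMk u, hφ u⟩,
        ⟨G'.connectedComponentMk v, by
          rw [hφ]; exact (ConnectedComponent.sound huv.reachable).symm⟩, ?_, ?_⟩
      · intro h
        exact hB (ConnectedComponent.eq.mp (congrArg Subtype.val h))
      · apply Set.eq_univ_of_forall
        rintro ⟨C', hC'⟩
        rcases fib_u C' hC' with rfl | rfl
        · exact Set.mem_insert _ _
        · exact Set.mem_insert_of_mem _ (by simp)
    · rw [Nat.card_eq_one_iff_unique]
      obtain ⟨w, rfl⟩ := C.exists_rep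
      constructor
      · constructor
        rintro ⟨C1, h1⟩ ⟨C2, h2⟩
        obtain ⟨w1, rfl⟩ := C1.exists_rep
        obtain ⟨w2, rfl⟩ := C2.exists_rep
        exact Subtype.ext (fib_other _ hC w1 w2 h1 h2)
      · exact ⟨⟨G'.connectedComponentMk w, hφ w⟩⟩
  rw [e1, Finset.sum_congr rfl (fun C _ => hval C)]
  have : ∀ C : G.ConnectedComponent,
      (if C = G.connectedComponentMk u then 2 else 1)
        = (if C = G.connectedComponentMk u then 1 else 0) + 1 := by
    intro C; split_ifs <;> rfl
  rw [Finset.sum_congr rfl (fun C _ => this C), Finset.sum_add_distrib,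
    Finset.sum_ite_eq' Finset.univ (G.connectedComponentMk u) (fun _ => 1)]
  simp only [Finset.mem_univ, if_true, Finset.sum_const, smul_eq_mul, mul_one,
    Finset.card_univ, Nat.card_eq_fintype_card]
  omega

lemma euler [Finite V] : ∀ (n : ℕ) (G : SimpleGraph V), Nat.card G.edgeSet = n →
    (Nat.card V ≤ n + Nat.card G.ConnectedComponent ∧
     (G.IsAcyclic ↔ Nat.card V = n + Nat.card G.ConnectedComponent)) := by
  intro n
  induction n using Nat.strong_induction_on with
  | _ n ih =>
  intro G hn
  rcases Set.eq_empty_or_nonempty G.edgeSet with hE | hE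
  · have hbot : G = ⊥ := edgeSet_eq_empty.mp hE
    subst hbot
    have h0 : n = 0 := by simpa using hn.symm
    have hV : Nat.card (⊥ : SimpleGraph V).ConnectedComponent = Nat.card V := by
      refine Nat.card_congr ⟨Quot.lift id (fun a b h => reachable_bot.mp h),
        (⊥ : SimpleGraph V).connectedComponentMk, ?_, fun w => rfl⟩
      exact Quot.ind (fun w => rfl)
    refine ⟨by omega, ?_⟩
    have hacy : (⊥ : SimpleGraph V).IsAcyclic := by
      intro w p hp
      cases p with
      | nil => exact hp.ne_nil rfl
      | cons h _ => exact h.elim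
    simp [hacy, h0, hV]
  · obtain ⟨e, he⟩ := hE
    induction e using Sym2.ind with
    | _ u v =>
    have huv : G.Adj u v := he
    set G' := G.deleteEdges {s(u,v)} with hG'
    have hedges : G'.edgeSet = G.edgeSet \ {s(u,v)} := edgeSet_deleteEdges _
    have hn1 : 1 ≤ n := by
      rw [← hn, Nat.card_coe_set_eq]
      exact (Set.ncard_pos (Set.toFinite _)).mpr ⟨_, he⟩
    have hm : Nat.card G'.edgeSet = n - 1 := by
      rw [Nat.card_coe_set_eq, hedges, Set.ncard_diff_singleton_of_mem he,
        ← Nat.card_coe_set_eq, hn]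
    by_cases hR : G'.Reachable u v
    · have hcc : Nat.card G'.ConnectedComponent = Nat.card G.ConnectedComponent := by
        refine Nat.card_congr (Quot.congrRight fun a b => ?_).symm
        exact ⟨fun h => reach_delete_of_reach hR h, fun h => h.mono (deleteEdges_le _)⟩
      have IH := ih (n - 1) (by omega) G' hm
      have hnotac : ¬ G.IsAcyclic := by
        obtain ⟨w, p, hp, _⟩ := adj_and_reachable_delete_edges_iff_exists_cycle.mp ⟨huv, hR⟩
        exact fun h => h p hp
      rw [hcc] at IH
      refine ⟨by omega, ⟨fun h => absurd h hnotac, fun h => ?_⟩⟩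
      exfalso
      omega
    · have hcc := card_cc_delete huv hR
      rw [← hG'] at hcc
      have IH := ih (n - 1) (by omega) G' hm
      rw [hcc] at IH
      have hGacy : G.IsAcyclic ↔ G'.IsAcyclic := by
        constructor
        · intro h w p hp
          exact h (p.mapLe (deleteEdges_le _)) (hp.mapLe _)
        · intro h w p hp
          have hbridge : G.IsBridge s(u, v) := isBridge_iff.mpr hR
          have hne := ((isBridge_iff_adj_and_forall_cycle_notMem huv).mp hbridge) p hp
          have hproof : ∀ e' ∈ p.edges, e' ∉ ({s(u,v)} : Set (Sym2 V)) := by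
            intro e' he'
            simp only [Set.mem_singleton_iff]
            rintro rfl
            exact hne he'
          exact h (p.toDeleteEdges _ hproof) (Walk.IsCycle.toDeleteEdges _ _ hp hproof)
      refine ⟨by omega, ?_⟩
      rw [hGacy, IH.2]
      omega

lemma sup_setoid (Fp Fq : SimpleGraph V) :
    (Fp ⊔ Fq).reachableSetoid = Fp.reachableSetoid ⊔ Fq.reachableSetoid := by
  apply le_antisymm
  · rw [Setoid.le_def]
    intro a b hab
    obtain ⟨p⟩ := (hab : (Fp ⊔ Fq).Reachable a b)
    induction p with
    | nil => exact (Fp.reachableSetoid ⊔ Fq.reachableSetoid).iseqv.refl _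
    | @cons a c b h p ih =>
      refine (Fp.reachableSetoid ⊔ Fq.reachableSetoid).iseqv.trans ?_ ih
      rcases h with h | h
      · exact Setoid.le_def.mp le_sup_left (h.reachable : Fp.reachableSetoid a c)
      · exact Setoid.le_def.mp le_sup_right (h.reachable : Fq.reachableSetoid a c)
  · apply sup_le
    · rw [Setoid.le_def]
      intro a b h
      exact Reachable.mono (le_sup_left : Fp ≤ Fp ⊔ Fq) h
    · rw [Setoid.le_def]
      intro a b h
      exact Reachable.mono (le_sup_right : Fq ≤ Fp ⊔ Fq) h

end UnionForestAux

open UnionForestAux in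
/-- For edge-disjoint forests `F_p`, `F_q` on the same finite vertex set `V`, the union graph
is a forest iff `acyclic(cc(F_p), cc(F_q))` holds, where `cc` is the partition into
connected components (the reachability setoid). -/
theorem union_forest_iff_acyclic {V : Type*} [Finite V] (Fp Fq : SimpleGraph V)
    (hFp : Fp.IsAcyclic) (hFq : Fq.IsAcyclic)
    (hdisj : ∀ u v, ¬(Fp.Adj u v ∧ Fq.Adj u v)) :
    (Fp ⊔ Fq).IsAcyclic ↔ acyclicPart Fp.reachableSetoid Fq.reachableSetoid := by
  classical
  have hp := (euler _ Fp rfl).2.mp hFp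
  have hq := (euler _ Fq rfl).2.mp hFq
  have hu := (euler _ (Fp ⊔ Fq) rfl).2
  have hdisjE : Disjoint Fp.edgeSet Fq.edgeSet := by
    rw [Set.disjoint_left]
    intro e hep heq
    induction e using Sym2.ind with
    | _ a b => exact hdisj a b ⟨hep, heq⟩
  have hm : Nat.card (Fp ⊔ Fq).edgeSet = Nat.card Fp.edgeSet + Nat.card Fq.edgeSet := by
    rw [Nat.card_coe_set_eq, Nat.card_coe_set_eq, Nat.card_coe_set_eq,
      SimpleGraph.edgeSet_sup, Set.ncard_union_eq hdisjE (Set.toFinite _) (Set.toFinite _)]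
  have hcc : Nat.card (Quotient (Fp.reachableSetoid ⊔ Fq.reachableSetoid))
      = Nat.card (Fp ⊔ Fq).ConnectedComponent := by
    rw [← sup_setoid]; rfl
  have e1 : Nat.card (Quotient Fp.reachableSetoid) = Nat.card Fp.ConnectedComponent := rfl
  have e2 : Nat.card (Quotient Fq.reachableSetoid) = Nat.card Fq.ConnectedComponent := rfl
  unfold acyclicPart
  rw [hcc, e1, e2, hu, hm]
  omega
end

section
/- Let V be a finite set, q a partition of V, and X ⊆ V such that no block of q is a subset of X. Then for every partition p of V \ X: the join of p↑X (the partition of V obtained from p by adding each element of X as a singleton block) with q equals the single-block partition {V} if and only if the join of p with q↓(V\X) (the partition of V\X obtained by intersecting each block of q with V\X and discarding empty sets) equals the single-block partition {V\X}. -/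
/-- `p↑X`: the partition of `V` obtained from a partition `p` of `V \ X` by adding each
element of `X` as a singleton block. -/
def Setoid.liftUp {V : Type*} (X : Set V) (p : Setoid {v : V // v ∉ X}) : Setoid V where
  r a b := a = b ∨ ∃ (ha : a ∉ X) (hb : b ∉ X), p.r ⟨a, ha⟩ ⟨b, hb⟩
  iseqv := by
    refine ⟨fun a => Or.inl rfl, ?_, ?_⟩
    · rintro a b (rfl | ⟨ha, hb, h⟩)
      · exact Or.inl rfl
      · exact Or.inr ⟨hb, ha, p.symm h⟩
    · rintro a b c (rfl | ⟨ha, hb, hab⟩) h2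
      · exact h2
      · rcases h2 with rfl | ⟨hb', hc, hbc⟩
        · exact Or.inr ⟨ha, hb, hab⟩
        · exact Or.inr ⟨ha, hc, p.trans hab hbc⟩

/-- If no block of `q` is contained in `X`, then `p↑X ⊔ q = {V}` iff
`p ⊔ q↓(V\X) = {V\X}` (restriction `q↓(V\X)` is `Setoid.comap Subtype.val q`). -/
theorem liftUp_join_top_iff {V : Type*} [Finite V] (X : Set V) (q : Setoid V)
    (hq : ∀ v : V, ∃ w, q.r v w ∧ w ∉ X) (p : Setoid {v : V // v ∉ X}) :
    Setoid.liftUp X p ⊔ q = ⊤ ↔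
      p ⊔ Setoid.comap (Subtype.val : {v : V // v ∉ X} → V) q = ⊤ := by
  classical
  choose f hf hfX using hq
  set T := p ⊔ Setoid.comap (Subtype.val : {v : V // v ∉ X} → V) q with hT
  set S := Setoid.liftUp X p ⊔ q with hS
  have hpT : p ≤ T := le_sup_left
  have hqT : Setoid.comap (Subtype.val : {v : V // v ∉ X} → V) q ≤ T := le_sup_right
  have hqT' : ∀ a b : {v : V // v ∉ X}, q a.val b.val → T a b := fun a b h =>
    Setoid.le_def.mp hqT h
  have hlS : Setoid.liftUp X p ≤ S := le_sup_left
  have hqS : q ≤ S := le_sup_right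
  set g : V → {v : V // v ∉ X} := fun v => ⟨f v, hfX v⟩ with hg
  constructor
  · intro h
    rw [Setoid.eq_top_iff]
    intro x y
    -- show S ≤ comap g T
    have hstep : S ≤ Setoid.comap g T := by
      rw [hS]
      apply sup_le
      · rintro a b (rfl | ⟨ha, hb, hab⟩)
        · exact Setoid.refl' _ _
        · have h1 : T (g a) ⟨a, ha⟩ := hqT' _ _ (q.symm (hf a))
          have h2 : T ⟨a, ha⟩ ⟨b, hb⟩ := Setoid.le_def.mp hpT hab
          have h3 : T ⟨b, hb⟩ (g b) := hqT' _ _ (hf b)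
          exact T.trans h1 (T.trans h2 h3)
      · intro a b hab
        exact hqT' (g a) (g b) (q.trans (q.symm (hf a)) (q.trans hab (hf b)))
    have hTgxy : T (g x.val) (g y.val) := Setoid.le_def.mp hstep (by rw [h]; trivial)
    have h1 : T x (g x.val) := hqT' _ _ (hf x.val)
    have h2 : T (g y.val) y := hqT' _ _ (q.symm (hf y.val))
    exact T.trans h1 (T.trans hTgxy h2)
  · intro h
    rw [Setoid.eq_top_iff]
    intro x y
    have hstep : T ≤ Setoid.comap (Subtype.val : {v : V // v ∉ X} → V) S := by
      rw [hT]
      apply sup_le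
      · intro a b hab
        exact Setoid.le_def.mp hlS (Or.inr ⟨a.2, b.2, hab⟩)
      · intro a b hab
        exact Setoid.le_def.mp hqS hab
    have hSg : S (f x) (f y) :=
      Setoid.le_def.mp hstep (x := g x) (y := g y) (by rw [h]; trivial)
    exact S.trans (Setoid.le_def.mp hqS (hf x)) (S.trans hSg
      (Setoid.le_def.mp hqS (q.symm (hf y))))
end

section
/- Let V be a finite nonempty set with a fixed element v₀, and let cuts(V) be the set of bipartitions (V₁, V₂) of V with v₀ ∈ V₁. For partitions p, q of V, the number of cuts (V₁, V₂) ∈ cuts(V) that are refined by both p and q is odd if and only if p ⊔ q = {V}, i.e., the join of p and q in the partition lattice is the single-block partition. (Equivalently, over GF(2), the matrix M with M[p,q] = [p ⊔ q = {V}] factors as M = C·Cᵀ where C[p,(V₁,V₂)] = [p refines (V₁,V₂)].) -/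
/-- The number of cuts `(S, Sᶜ)` with `v₀ ∈ S` refined by both partitions `p` and `q`
is odd iff `p ⊔ q` is the single-block partition `{V}` (i.e. `⊤`). -/
theorem odd_card_cuts_iff_join_top {V : Type*} [Finite V] (v0 : V) (p q : Setoid V) :
    Odd (Nat.card {S : Set V // v0 ∈ S ∧ (∀ a b, p.r a b → (a ∈ S ↔ b ∈ S)) ∧
        (∀ a b, q.r a b → (a ∈ S ↔ b ∈ S))}) ↔ p ⊔ q = ⊤ := by
  classical
  set r := p ⊔ q with hr
  -- a set respects p and q iff it respects r = p ⊔ q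
  have key : ∀ S : Set V, ((∀ a b, p.r a b → (a ∈ S ↔ b ∈ S)) ∧
      (∀ a b, q.r a b → (a ∈ S ↔ b ∈ S))) ↔ (∀ a b, r.r a b → (a ∈ S ↔ b ∈ S)) := by
    intro S
    constructor
    · rintro ⟨hp, hq⟩ a b hab
      have hle : r ≤ Setoid.ker (· ∈ S) := by
        refine sup_le ?_ ?_
        · intro a b h; exact eq_iff_iff.mpr (hp a b h)
        · intro a b h; exact eq_iff_iff.mpr (hq a b h)
      exact eq_iff_iff.mp (hle hab)
    · intro h
      refine ⟨fun a b hab => h a b (le_sup_left (a := p) (b := q) hab),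
        fun a b hab => h a b (le_sup_right (a := p) (b := q) hab)⟩
  have hout : ∀ a : V, r.r a (Quotient.mk r a).out := fun a =>
    Quotient.exact (Quotient.mk r a).out_eq.symm
  -- equivalence with sets of the quotient containing the class of v0
  let e1 : {S : Set V // v0 ∈ S ∧ (∀ a b, p.r a b → (a ∈ S ↔ b ∈ S)) ∧
      (∀ a b, q.r a b → (a ∈ S ↔ b ∈ S))} ≃
      {T : Set (Quotient r) // Quotient.mk r v0 ∈ T} :=
    { toFun := fun S => ⟨{c | c.out ∈ S.1}, by
        have h := (key S.1).mp S.2.2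
        exact (h _ _ (hout v0)).mp S.2.1⟩
      invFun := fun T => ⟨Quotient.mk r ⁻¹' T.1, T.2, (key _).mpr
        (fun a b hab => by simp [Set.mem_preimage, Quotient.sound hab])⟩
      left_inv := fun S => by
        apply Subtype.ext
        ext a
        have h := (key S.1).mp S.2.2
        exact (h _ _ (hout a)).symm
      right_inv := fun T => by
        apply Subtype.ext
        ext c
        simp [Quotient.out_eq] }
  -- equivalence with subsets of the quotient minus the class of v0
  let q0 := Quotient.mk r v0
  let e2 : {T : Set (Quotient r) // q0 ∈ T} ≃ Set {c : Quotient r // c ≠ q0} :=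
    { toFun := fun T => {c | c.1 ∈ T.1}
      invFun := fun U => ⟨{c | c = q0 ∨ ∃ h : c ≠ q0, (⟨c, h⟩ : {c // c ≠ q0}) ∈ U},
        Or.inl rfl⟩
      left_inv := fun T => by
        apply Subtype.ext
        ext c
        by_cases h : c = q0
        · subst h; simpa using T.2
        · simp [h]
      right_inv := fun U => by
        ext ⟨c, h⟩
        simp [h] }
  rw [Nat.card_congr (e1.trans e2)]
  have hprop : Nat.card Prop = 2 := by
    rw [Nat.card_congr Equiv.propEquivBool]
    simp [Nat.card_eq_fintype_card]
  have hcard : Nat.card (Set {c : Quotient r // c ≠ q0}) =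
      2 ^ Nat.card {c : Quotient r // c ≠ q0} := by
    rw [show (Set {c : Quotient r // c ≠ q0}) = ({c : Quotient r // c ≠ q0} → Prop) from rfl,
      Nat.card_fun, hprop]
  rw [hcard, ← Nat.not_even_iff_odd, Nat.even_pow]
  simp only [not_and, ne_eq, not_not]
  have h2 : Even 2 := even_two
  constructor
  · intro h
    have h0 : Nat.card {c : Quotient r // c ≠ q0} = 0 := h h2
    rw [Nat.card_eq_zero] at h0
    rcases h0 with h0 | h0
    · rw [← Quotient.subsingleton_iff (s := r)]
      constructor
      intro a b
      by_cases ha : a = q0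
      · by_cases hb : b = q0
        · rw [ha, hb]
        · exact (h0.false ⟨b, hb⟩).elim
      · exact (h0.false ⟨a, ha⟩).elim
    · exact absurd h0 (by
        have : Finite {c : Quotient r // c ≠ q0} := Subtype.finite
        exact not_infinite_iff_finite.mpr this)
  · intro h _
    rw [Nat.card_eq_zero]
    left
    constructor
    rintro ⟨c, hc⟩
    have := (Quotient.subsingleton_iff (s := r)).mpr h
    exact hc (Subsingleton.elim c q0)
end
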